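/- Mean-payoff games reduce to average-energy games by edge doubling: let G = (S₁, S₂, E, w) be a game and define G' = (S₁ ∪ E, S₂, E', w') where for every edge e = (s, s') ∈ E, G' has an edge (s, e) with weight w'(s, e) = 2·w(e) and an edge (e, s') with weight w'(e, s') = −2·w(e) (these are all the edges of G', and every state e ∈ E belongs to player 1). Then for every s₀ ∈ S and t ∈ ℚ, player 1 has a winning strategy from s₀ for MeanPayOff(t) in G if and only if player 1 has a winning strategy from s₀ for AvgEnergyLevel(t) in G'. -/

import Mathlib

open Filter

noncomputable section

/-- A two-player turn-based game on a (finite) state space `S`: `p1 s` holds iff state `s`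
belongs to player 1 (otherwise it belongs to player 2), `E` is the edge relation (every state
has a successor), and `w` assigns an integer weight to every edge. -/
structure Game (S : Type) where
  p1 : S → Prop
  E : S → S → Prop
  w : S → S → ℤ
  succ : ∀ s, ∃ t, E s t

variable {S : Type}

/-- `π` is a play of `G` starting from `s₀`. -/
def IsPlay (G : Game S) (s₀ : S) (π : ℕ → S) : Prop :=
  π 0 = s₀ ∧ ∀ n, G.E (π n) (π (n + 1))

/-- Energy level of the play `π` at position `n`. -/
def ELp (G : Game S) (π : ℕ → S) (n : ℕ) : ℤ :=
  ∑ i ∈ Finset.range n, G.w (π i) (π (i + 1))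

/-- Average-energy of a play (limsup variant), in the extended reals. -/
def AEsupP (G : Game S) (π : ℕ → S) : EReal :=
  limsup (fun n : ℕ => (((∑ i ∈ Finset.range n, (ELp G π (i + 1) : ℝ)) / n : ℝ) : EReal)) atTop

/-- Average-energy of a play (liminf variant). -/
def AEinfP (G : Game S) (π : ℕ → S) : EReal :=
  liminf (fun n : ℕ => (((∑ i ∈ Finset.range n, (ELp G π (i + 1) : ℝ)) / n : ℝ) : EReal)) atTop

/-- Mean-payoff of a play (limsup variant). -/
def MPsupP (G : Game S) (π : ℕ → S) : EReal :=
  limsup (fun n : ℕ => (((ELp G π n : ℝ) / n : ℝ) : EReal)) atTop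

/-- Total-payoff of a play (limsup variant). -/
def TPsupP (G : Game S) (π : ℕ → S) : EReal :=
  limsup (fun n : ℕ => ((ELp G π n : ℝ) : EReal)) atTop

/-- The history (finite prefix) `π 0, …, π n` of a play, as a list. -/
def hist (π : ℕ → S) (n : ℕ) : List S := List.ofFn (fun i : Fin (n + 1) => π i)

/-- A (deterministic) strategy for player 1: on every nonempty finite path of `G` ending in a
player-1 state, it prescribes an `E`-successor of the last state. -/
def IsStrat1 (G : Game S) (σ : List S → S) : Prop :=
  ∀ (ρ : List S) (h : ρ ≠ []), List.Chain' G.E ρ → G.p1 (ρ.getLast h) →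
    G.E (ρ.getLast h) (σ ρ)

/-- A strategy for player 2 (who owns the states where `p1` fails). -/
def IsStrat2 (G : Game S) (σ : List S → S) : Prop :=
  ∀ (ρ : List S) (h : ρ ≠ []), List.Chain' G.E ρ → ¬ G.p1 (ρ.getLast h) →
    G.E (ρ.getLast h) (σ ρ)

/-- A strategy is memoryless if its choice only depends on the last state of the history. -/
def Memoryless (σ : List S → S) : Prop :=
  ∀ (ρ ρ' : List S) (h : ρ ≠ []) (h' : ρ' ≠ []),
    ρ.getLast h = ρ'.getLast h' → σ ρ = σ ρ'

/-- The play `π` is consistent with the player-1 strategy `σ`. -/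
def Consistent1 (G : Game S) (σ : List S → S) (π : ℕ → S) : Prop :=
  ∀ n, G.p1 (π n) → π (n + 1) = σ (hist π n)

/-- The play `π` is consistent with the player-2 strategy `σ`. -/
def Consistent2 (G : Game S) (σ : List S → S) (π : ℕ → S) : Prop :=
  ∀ n, ¬ G.p1 (π n) → π (n + 1) = σ (hist π n)

/-- `σ` is a winning strategy for player 1 from `s₀` for the objective `Obj`:
every consistent play from `s₀` belongs to `Obj`. -/
def Winning1 (G : Game S) (s₀ : S) (σ : List S → S) (Obj : (ℕ → S) → Prop) : Prop :=
  IsStrat1 G σ ∧ ∀ π, IsPlay G s₀ π → Consistent1 G σ π → Obj π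

/-- `σ` is a winning strategy for player 2 from `s₀` against the objective `Obj`:
every consistent play from `s₀` lies outside `Obj`. -/
def Winning2 (G : Game S) (s₀ : S) (σ : List S → S) (Obj : (ℕ → S) → Prop) : Prop :=
  IsStrat2 G σ ∧ ∀ π, IsPlay G s₀ π → Consistent2 G σ π → ¬ Obj π

/-- Average-energy objective: the average-energy of the play is at most `t`. -/
def AvgEnergyLevel (G : Game S) (t : ℚ) : (ℕ → S) → Prop :=
  fun π => AEsupP G π ≤ ((t : ℝ) : EReal)

/-- Mean-payoff objective: the mean-payoff of the play is at most `t`. -/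
def MeanPayOff (G : Game S) (t : ℚ) : (ℕ → S) → Prop :=
  fun π => MPsupP G π ≤ ((t : ℝ) : EReal)

/-- Total-payoff objective: the total-payoff of the play is at most `t`. -/
def TotalPayOff (G : Game S) (t : ℤ) : (ℕ → S) → Prop :=
  fun π => TPsupP G π ≤ ((t : ℝ) : EReal)

/-- Lower-bounded energy objective with initial credit `c₀`. -/
def LowerObj (G : Game S) (c₀ : ℕ) : (ℕ → S) → Prop :=
  fun π => ∀ n, 0 ≤ (c₀ : ℤ) + ELp G π n

/-- Lower- and upper-bounded energy objective with upper bound `U` and initial credit `c₀`. -/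
def LUObj (G : Game S) (U c₀ : ℕ) : (ℕ → S) → Prop :=
  fun π => ∀ n, 0 ≤ (c₀ : ℤ) + ELp G π n ∧ (c₀ : ℤ) + ELp G π n ≤ (U : ℤ)

/-- The edge-doubling game `G'` built from `G`: its states are the states of `G` (owned as in
`G`) together with one player-1 state per edge of `G`; each edge `e = (s, s')` of `G` is split
into `s → e` of weight `2·w(e)` followed by `e → s'` of weight `-2·w(e)`. -/
def dblGame (G : Game S) : Game (S ⊕ {e : S × S // G.E e.1 e.2}) where
  p1 := fun x => match x with
    | Sum.inl s => G.p1 s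
    | Sum.inr _ => True
  E := fun x y => match x, y with
    | Sum.inl s, Sum.inr e => e.1.1 = s
    | Sum.inr e, Sum.inl s' => e.1.2 = s'
    | _, _ => False
  w := fun x y => match x, y with
    | Sum.inl _, Sum.inr e => 2 * G.w e.1.1 e.1.2
    | Sum.inr e, Sum.inl _ => -(2 * G.w e.1.1 e.1.2)
    | _, _ => 0
  succ := by
    rintro (s | e)
    · obtain ⟨u, hu⟩ := G.succ s
      exact ⟨Sum.inr ⟨(s, u), hu⟩, rfl⟩
    · exact ⟨Sum.inl e.1.2, rfl⟩

/-!
A play `π` of `G` corresponds to the play `π 0, (π 0, π 1), π 1, (π 1, π 2), …` of the doubled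
game. Its energy level is `0` at even positions and `2 · w(π n, π (n + 1))` at position `2n + 1`,
so the sum of its first `N` energy levels is `2 · EL(⌈N/2⌉)`. The average-energy sequence of the
doubled play is therefore the mean-payoff sequence of `π`, reparametrised by `N ↦ ⌈N/2⌉` and
multiplied by `2⌈N/2⌉/N → 1`, and both have the same limsup. Strategies transfer in both
directions because histories of corresponding plays determine each other, and the edge states of
the doubled game have a single successor.
-/

open Topology

theorem one_le_two_mul_half_succ_div {N : ℕ} (hN : 1 ≤ N) :
    1 ≤ (2 * ((N + 1) / 2 : ℕ) : ℝ) / N := by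
  rw [one_le_div (by positivity)]
  exact_mod_cast (by omega : N ≤ 2 * ((N + 1) / 2))

theorem tendsto_two_mul_half_succ_div :
    Tendsto (fun N : ℕ => (2 * ((N + 1) / 2 : ℕ) : ℝ) / N) atTop (𝓝 1) := by
  have hupper : Tendsto (fun N : ℕ => 1 + (N : ℝ)⁻¹) atTop (𝓝 1) := by
    simpa using tendsto_const_nhds.add (tendsto_inv_atTop_nhds_zero_nat (𝕜 := ℝ))
  refine tendsto_of_tendsto_of_tendsto_of_le_of_le' tendsto_const_nhds hupper
    (eventually_atTop.2 ⟨1, fun N hN => one_le_two_mul_half_succ_div hN⟩)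
    (eventually_atTop.2 ⟨1, fun N hN => ?_⟩)
  rw [div_le_iff₀ (by positivity), add_mul, inv_mul_cancel₀ (by positivity)]
  exact_mod_cast (by omega : 2 * ((N + 1) / 2) ≤ 1 * N + 1)

theorem limsup_mul_le_of_tendsto_one {α : Type*} {l : Filter α} {u k : α → ℝ}
    (hk_ge : ∀ᶠ a in l, 1 ≤ k a) (hk : Tendsto k l (𝓝 1)) :
    limsup (fun a => ((u a * k a : ℝ) : EReal)) l ≤ limsup (fun a => (u a : EReal)) l := by
  refine EReal.le_of_forall_lt_iff_le.1 fun c hc => ?_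
  obtain ⟨d, hud, hdc⟩ := EReal.lt_iff_exists_real_btwn.1 hc
  have hu : ∀ᶠ a in l, u a < d :=
    (eventually_lt_of_limsup_lt hud).mono fun _ h => EReal.coe_lt_coe_iff.1 h
  have hdk : ∀ᶠ a in l, d * k a < c :=
    (hk.const_mul d).eventually_lt_const (by simpa using EReal.coe_lt_coe_iff.1 hdc)
  refine limsup_le_of_le (by isBoundedDefault) ?_
  filter_upwards [hu, hdk, hk_ge] with a hua hdka hka
  rw [EReal.coe_le_coe_iff]
  rcases le_or_gt (u a) 0 with hua0 | hua0 <;> nlinarith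

section hist

theorem hist_ne_nil (π : ℕ → S) (n : ℕ) : hist π n ≠ [] := by
  simp [hist]

theorem getLast_hist (π : ℕ → S) (n : ℕ) : (hist π n).getLast (hist_ne_nil π n) = π n := by
  simp only [hist, List.getLast_ofFn]
  rfl

theorem getLast?_hist (π : ℕ → S) (n : ℕ) : (hist π n).getLast? = some (π n) := by
  rw [List.getLast?_eq_some_getLast (hist_ne_nil π n), getLast_hist]

theorem head?_hist (π : ℕ → S) (n : ℕ) : (hist π n).head? = some (π 0) := by
  simp only [hist, List.ofFn_succ, List.head?_cons, Fin.val_zero]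

theorem hist_succ' (π : ℕ → S) (n : ℕ) : hist π (n + 1) = hist π n ++ [π (n + 1)] := by
  simp only [hist, List.ofFn_succ', List.concat_eq_append]
  rfl

theorem hist_succ (π : ℕ → S) (n : ℕ) : hist π (n + 1) = π 0 :: hist (fun i => π (i + 1)) n := by
  simp only [hist, List.ofFn_succ]
  rfl

theorem isChain_hist {R : S → S → Prop} {π : ℕ → S} (hπ : ∀ n, R (π n) (π (n + 1))) (n : ℕ) :
    (hist π n).IsChain R := by
  induction n with
  | zero => exact List.isChain_singleton _
  | succ n ih =>
    rw [hist_succ']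
    refine List.isChain_append.2 ⟨ih, List.isChain_singleton _, fun x hx y hy => ?_⟩
    simp only [List.getLast?_eq_some_getLast (hist_ne_nil π n), getLast_hist, Option.mem_def,
      Option.some.injEq, List.head?_cons] at hx hy
    exact hx ▸ hy ▸ hπ n

end hist

namespace Game

abbrev Edge (G : Game S) : Type := {e : S × S // G.E e.1 e.2}

end Game

def dblPlay (G : Game S) (π : ℕ → S) (hπ : ∀ n, G.E (π n) (π (n + 1))) : ℕ → S ⊕ G.Edge :=
  fun m => if m % 2 = 0 then .inl (π (m / 2)) else .inr ⟨(π (m / 2), π (m / 2 + 1)), hπ _⟩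

section dblPlay

variable {G : Game S} {π : ℕ → S} (hπ : ∀ n, G.E (π n) (π (n + 1)))

@[simp]
theorem dblPlay_two_mul (n : ℕ) : dblPlay G π hπ (2 * n) = .inl (π n) := by
  simp [dblPlay]

@[simp]
theorem dblPlay_two_mul_add_one (n : ℕ) :
    dblPlay G π hπ (2 * n + 1) = .inr ⟨(π n, π (n + 1)), hπ n⟩ := by
  simp [dblPlay, Nat.add_mod, Nat.add_div]

theorem ELp_succ (G : Game S) (π : ℕ → S) (n : ℕ) :
    ELp G π (n + 1) = ELp G π n + G.w (π n) (π (n + 1)) :=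
  Finset.sum_range_succ _ _

theorem ELp_dblPlay_two_mul (n : ℕ) : ELp (dblGame G) (dblPlay G π hπ) (2 * n) = 0 := by
  induction n with
  | zero => simp [ELp]
  | succ n ih =>
    rw [show 2 * (n + 1) = 2 * n + 1 + 1 by ring, ELp_succ, ELp_succ, ih,
      ← show 2 * (n + 1) = 2 * n + 1 + 1 by ring]
    simp [dblGame]

theorem ELp_dblPlay_two_mul_add_one (n : ℕ) :
    ELp (dblGame G) (dblPlay G π hπ) (2 * n + 1) = 2 * G.w (π n) (π (n + 1)) := by
  rw [ELp_succ, ELp_dblPlay_two_mul]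
  simp [dblGame]

theorem sum_ELp_dblPlay (N : ℕ) :
    ∑ i ∈ Finset.range N, ELp (dblGame G) (dblPlay G π hπ) (i + 1) =
      2 * ELp G π ((N + 1) / 2) := by
  induction N with
  | zero => simp [ELp]
  | succ N ih =>
    rw [Finset.sum_range_succ, ih]
    obtain ⟨n, rfl | rfl⟩ := Nat.even_or_odd' N
    · rw [ELp_dblPlay_two_mul_add_one, show (2 * n + 1) / 2 = n by omega,
        show (2 * n + 1 + 1) / 2 = n + 1 by omega, ELp_succ]
      ring
    · rw [show 2 * n + 1 + 1 = 2 * (n + 1) by ring, ELp_dblPlay_two_mul, add_zero]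
      congr 2
      omega

theorem AEsupP_dblPlay : AEsupP (dblGame G) (dblPlay G π hπ) = MPsupP G π := by
  set m : ℕ → ℝ := fun n => (ELp G π n : ℝ) / n
  set a : ℕ → EReal := fun N => (m ((N + 1) / 2) * (2 * ((N + 1) / 2 : ℕ) / N) : ℝ)
  have hAE : AEsupP (dblGame G) (dblPlay G π hπ) = limsup a atTop := by
    rw [AEsupP]
    congr 1
    funext N
    have hsum := congrArg (Int.cast : ℤ → ℝ) (sum_ELp_dblPlay hπ N)
    push_cast at hsum
    rw [hsum]
    rcases Nat.eq_zero_or_pos ((N + 1) / 2) with hj | hj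
    · simp [a, m, show N = 0 by omega]
    · simp only [a, m]
      field_simp
  apply le_antisymm
  · calc _ = _ := hAE
      _ ≤ limsup (fun N => (m ((N + 1) / 2) : EReal)) atTop :=
        limsup_mul_le_of_tendsto_one
          (eventually_atTop.2 ⟨1, fun _ => one_le_two_mul_half_succ_div⟩)
          tendsto_two_mul_half_succ_div
      _ ≤ MPsupP G π :=
        (tendsto_atTop_atTop.2 fun n => ⟨2 * n, fun N hN => by omega⟩).limsup_comp_le_limsup
          (u := fun n => (m n : EReal))
  · have h2 : Tendsto (fun n : ℕ => 2 * n) atTop atTop :=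
      tendsto_atTop_atTop.2 fun n => ⟨n, fun N hN => by omega⟩
    calc MPsupP G π = limsup (a ∘ fun n => 2 * n) atTop := by
          rw [MPsupP]
          congr 1
          funext n
          rcases Nat.eq_zero_or_pos n with rfl | hn
          · simp [a, m]
          · simp only [Function.comp_apply, a, m, show (2 * n + 1) / 2 = n by omega]
            congr 1
            push_cast
            field_simp
      _ ≤ limsup a atTop := h2.limsup_comp_le_limsup
      _ = _ := hAE.symm

end dblPlay

section dblGame

variable {G : Game S}

theorem dblGame_E_inl_iff {s : S} {x : S ⊕ G.Edge} :
    (dblGame G).E (.inl s) x ↔ ∃ e : G.Edge, e.1.1 = s ∧ x = .inr e := by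
  rcases x with s' | e <;> simp [dblGame]

theorem dblGame_E_inr_iff {e : G.Edge} {x : S ⊕ G.Edge} :
    (dblGame G).E (.inr e) x ↔ x = .inl e.1.2 := by
  rcases x with s' | e' <;> simp [dblGame, eq_comm]

theorem dblPlay_add_two {π : ℕ → S} (hπ : ∀ n, G.E (π n) (π (n + 1))) (m : ℕ) :
    dblPlay G π hπ (m + 2) = dblPlay G (fun i => π (i + 1)) (fun i => hπ (i + 1)) m := by
  simp only [dblPlay, show (m + 2) % 2 = m % 2 by omega, show (m + 2) / 2 = m / 2 + 1 by omega]

theorem dblGame_E_dblPlay {π : ℕ → S} (hπ : ∀ n, G.E (π n) (π (n + 1))) (m : ℕ) :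
    (dblGame G).E (dblPlay G π hπ m) (dblPlay G π hπ (m + 1)) := by
  obtain ⟨n, rfl | rfl⟩ := Nat.even_or_odd' m
  · simp [dblGame_E_inl_iff]
  · rw [show 2 * n + 1 + 1 = 2 * (n + 1) by ring]
    simp [dblGame_E_inr_iff]

theorem isPlay_dblPlay {s₀ : S} {π : ℕ → S} (hπ : IsPlay G s₀ π) :
    IsPlay (dblGame G) (.inl s₀) (dblPlay G π hπ.2) :=
  ⟨hπ.1 ▸ dblPlay_two_mul hπ.2 0, dblGame_E_dblPlay hπ.2⟩

theorem exists_dblPlay_eq {s₀ : S} {π' : ℕ → S ⊕ G.Edge}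
    (hπ' : IsPlay (dblGame G) (.inl s₀) π') :
    ∃ π, ∃ hπ : IsPlay G s₀ π, dblPlay G π hπ.2 = π' := by
  have hedges : ∀ n, ∃ e : G.Edge, π' (2 * n) = .inl e.1.1 ∧ π' (2 * n + 1) = .inr e := by
    intro n
    obtain ⟨s, hs⟩ : ∃ s, π' (2 * n) = .inl s := by
      induction n with
      | zero => exact ⟨s₀, hπ'.1⟩
      | succ n ih =>
        obtain ⟨s, hs⟩ := ih
        obtain ⟨e, -, he⟩ := dblGame_E_inl_iff.1 (hs ▸ hπ'.2 (2 * n))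
        exact ⟨e.1.2, dblGame_E_inr_iff.1 (he ▸ hπ'.2 (2 * n + 1))⟩
    obtain ⟨e, rfl, he⟩ := dblGame_E_inl_iff.1 (hs ▸ hπ'.2 (2 * n))
    exact ⟨e, hs, he⟩
  choose e heven hodd using hedges
  have hlink : ∀ n, (e n).1.2 = (e (n + 1)).1.1 := fun n => by
    have := dblGame_E_inr_iff.1 (hodd n ▸ hπ'.2 (2 * n + 1))
    rw [show 2 * n + 1 + 1 = 2 * (n + 1) by ring, heven] at this
    exact (Sum.inl_injective this).symm
  have hplay : IsPlay G s₀ (fun n => (e n).1.1) :=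
    ⟨Sum.inl_injective (hπ'.1 ▸ heven 0).symm, fun n => by simpa only [hlink] using (e n).2⟩
  refine ⟨_, hplay, funext fun m => ?_⟩
  obtain ⟨n, rfl | rfl⟩ := Nat.even_or_odd' m
  · rw [dblPlay_two_mul, heven]
  · rw [dblPlay_two_mul_add_one, hodd]
    exact congrArg Sum.inr (Subtype.ext (Prod.ext rfl (hlink n).symm))

end dblGame

section dblList

variable {G : Game S}

theorem filterMap_getLeft?_hist_dblPlay {π : ℕ → S} (hπ : ∀ n, G.E (π n) (π (n + 1))) (n : ℕ) :
    (hist (dblPlay G π hπ) (2 * n)).filterMap Sum.getLeft? = hist π n := by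
  induction n with
  | zero => rfl
  | succ n ih =>
    rw [show 2 * (n + 1) = 2 * n + 1 + 1 by ring, hist_succ', hist_succ', List.filterMap_append,
      List.filterMap_append, ih, ← show 2 * (n + 1) = 2 * n + 1 + 1 by ring, hist_succ']
    simp

open Classical in
def dblList (G : Game S) : List S → List (S ⊕ G.Edge)
  | [] => []
  | [s] => [.inl s]
  | s :: s' :: l =>
    if h : G.E s s' then .inl s :: .inr ⟨(s, s'), h⟩ :: dblList G (s' :: l)
    else .inl s :: dblList G (s' :: l)

theorem exists_dblList_cons (s : S) (l : List S) : ∃ l', dblList G (s :: l) = .inl s :: l' := by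
  cases l with
  | nil => exact ⟨[], rfl⟩
  | cons s' l => rw [dblList]; split <;> exact ⟨_, rfl⟩

theorem dblList_cons_cons {s s' : S} (h : G.E s s') (l : List S) :
    dblList G (s :: s' :: l) = .inl s :: .inr ⟨(s, s'), h⟩ :: dblList G (s' :: l) := by
  rw [dblList, dif_pos h]

theorem getLast?_dblList (ρ : List S) : (dblList G ρ).getLast? = ρ.getLast?.map .inl := by
  fun_induction dblList G ρ with
  | case1 | case2 => rfl
  | case3 s s' l _ ih | case4 s s' l _ ih =>
    obtain ⟨l', hl'⟩ := exists_dblList_cons (G := G) s' l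
    rw [hl'] at ih ⊢
    simpa using ih

theorem isChain_dblList {ρ : List S} (hρ : ρ.IsChain G.E) :
    (dblList G ρ).IsChain (dblGame G).E := by
  fun_induction dblList G ρ with
  | case1 => exact .nil
  | case2 s => exact .singleton _
  | case3 s s' l h ih =>
    obtain ⟨l', hl'⟩ := exists_dblList_cons (G := G) s' l
    have htail := ih (List.isChain_cons_cons.1 hρ).2
    rw [hl'] at htail ⊢
    exact .cons_cons rfl (.cons_cons rfl htail)
  | case4 s s' l h => exact absurd (List.isChain_cons_cons.1 hρ).1 h

theorem dblList_hist {π : ℕ → S} (hπ : ∀ n, G.E (π n) (π (n + 1))) (n : ℕ) :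
    dblList G (hist π n) = hist (dblPlay G π hπ) (2 * n) := by
  induction n generalizing π with
  | zero => exact congrArg (fun x => [x]) (dblPlay_two_mul hπ 0).symm
  | succ n ih =>
    obtain ⟨l, hl⟩ := List.head?_eq_some_iff.1 (head?_hist (fun i => π (i + 1)) n)
    rw [hist_succ, hl, dblList_cons_cons (hπ 0), ← hl, ih (fun i => hπ (i + 1)),
      show 2 * (n + 1) = 2 * n + 1 + 1 by ring, hist_succ, hist_succ, ← dblPlay_two_mul hπ 0,
      ← dblPlay_two_mul_add_one hπ 0]
    simp [dblPlay_add_two]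

end dblList

theorem IsStrat1.edge {G : Game S} {σ : List S → S} (hσ : IsStrat1 G σ) {ρ : List S}
    (hρ : ρ.IsChain G.E) {s : S} (hlast : ρ.getLast? = some s) (hs : G.p1 s) : G.E s (σ ρ) := by
  have hne : ρ ≠ [] := fun h => by simp [h] at hlast
  rw [List.getLast?_eq_some_getLast hne, Option.some_inj] at hlast
  subst hlast
  exact hσ ρ hne hρ hs

section strategies

variable {G : Game S}

-- The fallback moves are never used along plays: they only make the strategy total and legal.
open Classical in
def fwdStrat (G : Game S) (σ : List S → S) (ρ' : List (S ⊕ G.Edge)) : S ⊕ G.Edge :=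
  match ρ'.getLast? with
  | some (.inl s) =>
    if h : G.E s (σ (ρ'.filterMap Sum.getLeft?)) then .inr ⟨(s, _), h⟩
    else .inr ⟨(s, (G.succ s).choose), (G.succ s).choose_spec⟩
  | some (.inr e) => .inl e.1.2
  | none => .inl (σ [])

theorem isStrat1_fwdStrat (σ : List S → S) : IsStrat1 (dblGame G) (fwdStrat G σ) := by
  intro ρ' hne _ _
  rcases hlast : ρ'.getLast hne with s | e <;>
    simp only [fwdStrat, List.getLast?_eq_some_getLast hne, hlast]
  · split_ifs <;> rfl
  · rfl

theorem consistent1_of_consistent1_dblPlay {σ : List S → S} (hσ : IsStrat1 G σ) {π : ℕ → S}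
    (hπ : ∀ n, G.E (π n) (π (n + 1)))
    (hcons : Consistent1 (dblGame G) (fwdStrat G σ) (dblPlay G π hπ)) :
    Consistent1 G σ π := by
  intro n hn
  have hmove := hcons (2 * n) (by simpa [dblGame] using hn)
  have hedge := hσ.edge (isChain_hist hπ n) (getLast?_hist π n) hn
  simp only [fwdStrat, getLast?_hist, dblPlay_two_mul, filterMap_getLeft?_hist_dblPlay,
    dblPlay_two_mul_add_one] at hmove
  rw [dif_pos (by rwa [filterMap_getLeft?_hist_dblPlay])] at hmove
  exact congrArg (fun e : G.Edge => e.1.2) (Sum.inr_injective hmove)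

def revStrat (G : Game S) (σ' : List (S ⊕ G.Edge) → S ⊕ G.Edge) (ρ : List S) : S :=
  match σ' (dblList G ρ) with
  | .inl s => s -- never reached on a history ending in a player-1 state
  | .inr e => e.1.2

theorem isStrat1_revStrat {σ' : List (S ⊕ G.Edge) → S ⊕ G.Edge} (hσ' : IsStrat1 (dblGame G) σ') :
    IsStrat1 G (revStrat G σ') := by
  intro ρ hne hρ hs
  have hedge := hσ'.edge (s := .inl (ρ.getLast hne)) (isChain_dblList hρ)
    (by rw [getLast?_dblList, List.getLast?_eq_some_getLast hne]; rfl) hs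
  obtain ⟨e, he1, he⟩ := dblGame_E_inl_iff.1 hedge
  rw [show revStrat G σ' ρ = e.1.2 by simp [revStrat, he], ← he1]
  exact e.2

theorem consistent1_dblPlay {σ' : List (S ⊕ G.Edge) → S ⊕ G.Edge} (hσ' : IsStrat1 (dblGame G) σ')
    {π : ℕ → S} (hπ : ∀ n, G.E (π n) (π (n + 1))) (hcons : Consistent1 G (revStrat G σ') π) :
    Consistent1 (dblGame G) σ' (dblPlay G π hπ) := by
  intro m hm
  have hchain := isChain_hist (dblGame_E_dblPlay hπ) m
  have hedge := hσ'.edge hchain (getLast?_hist _ m) hm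
  obtain ⟨n, rfl | rfl⟩ := Nat.even_or_odd' m
  · rw [dblPlay_two_mul, dblGame_E_inl_iff] at hedge
    obtain ⟨e, he1, he⟩ := hedge
    have hnext : π (n + 1) = e.1.2 := by
      rw [hcons n (by simpa [dblGame] using hm), revStrat, dblList_hist hπ, he]
    rw [he, dblPlay_two_mul_add_one]
    exact congrArg Sum.inr (Subtype.ext (Prod.ext he1.symm hnext))
  · rw [dblPlay_two_mul_add_one, dblGame_E_inr_iff] at hedge
    rw [hedge, show 2 * n + 1 + 1 = 2 * (n + 1) by ring, dblPlay_two_mul]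

end strategies

theorem exists_winning1_dblGame_iff {G : Game S} {s₀ : S} {O : (ℕ → S) → Prop}
    {O' : (ℕ → S ⊕ G.Edge) → Prop} (hO : ∀ π hπ, O' (dblPlay G π hπ) ↔ O π) :
    (∃ σ, Winning1 G s₀ σ O) ↔ ∃ σ', Winning1 (dblGame G) (.inl s₀) σ' O' := by
  constructor
  · rintro ⟨σ, hσ, hwin⟩
    refine ⟨fwdStrat G σ, isStrat1_fwdStrat σ, fun π' hπ' hcons => ?_⟩
    obtain ⟨π, hπ, rfl⟩ := exists_dblPlay_eq hπ'
    exact (hO π hπ.2).2 (hwin π hπ (consistent1_of_consistent1_dblPlay hσ hπ.2 hcons))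
  · rintro ⟨σ', hσ', hwin⟩
    refine ⟨revStrat G σ', isStrat1_revStrat hσ', fun π hπ hcons => ?_⟩
    exact (hO π hπ.2).1 (hwin _ (isPlay_dblPlay hπ) (consistent1_dblPlay hσ' hπ.2 hcons))

theorem MP_reduces_to_AE_general {S : Type} (G : Game S) (s₀ : S) (t : ℚ) :
    (∃ σ : List S → S, Winning1 G s₀ σ (MeanPayOff G t)) ↔
    (∃ σ, Winning1 (dblGame G) (Sum.inl s₀) σ (AvgEnergyLevel (dblGame G) t)) :=
  exists_winning1_dblGame_iff fun π hπ => by rw [AvgEnergyLevel, MeanPayOff, AEsupP_dblPlay]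

/-- Reduction of mean-payoff games to average-energy games by edge doubling: player 1 wins
`MeanPayOff t` from `s₀` in `G` iff he wins `AvgEnergyLevel t` from `s₀` in the doubled game. -/
theorem MP_reduces_to_AE {S : Type} [Fintype S] (G : Game S) (s₀ : S) (t : ℚ) :
    (∃ σ : List S → S, Winning1 G s₀ σ (MeanPayOff G t)) ↔
    (∃ σ, Winning1 (dblGame G) (Sum.inl s₀) σ (AvgEnergyLevel (dblGame G) t)) :=
  MP_reduces_to_AE_general G s₀ t

end
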